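/- Let D be a k-linear triangulated category of finite type with a Serre functor S, equipped with a t-structure (D≤0, D≥0). An object X is Ext-projective in D≤0 (i.e., X ∈ D≤0 and Hom(X, Y[1]) = 0 for all Y ∈ D≤0) if and only if X ∈ D≤0 and S X ∈ D≥0, if and only if S X is Ext-injective in D≥0 (i.e., S X ∈ D≥0 and Hom(Y, S X[1]) = 0 for all Y ∈ D≥0). -/

import Mathlib

/-!
Serre duality turns `Hom(X, Y⟦1⟧) = 0` into `Hom(Y⟦1⟧, S X) = 0`, and `Hom(Y, (S X)⟦1⟧) = 0`
into `Hom(X, Y⟦-1⟧) = 0`. As `Y` runs over `D^{≤0}` (resp. `D^{≥0}`), `Y⟦1⟧` runs over `D^{≤-1}`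
(resp. `Y⟦-1⟧` over `D^{≥1}`), so by the orthogonality `D^{≥0} = (D^{≤-1})^⊥` and
`D^{≤0} = ^⊥(D^{≥1})` the first condition says `S X ∈ D^{≥0}` and the second `X ∈ D^{≤0}`.
-/

open CategoryTheory CategoryTheory.Limits CategoryTheory.Pretriangulated
open CategoryTheory.Triangulated

universe v u

variable (k : Type*) [Field k]

/-- A Serre functor on a Hom-finite `k`-linear category: an autoequivalence `E`
together with functorial isomorphisms `Hom(X, Y) ≅ (Hom(Y, E X))ᵛ`. -/
structure SerreFunctorData (C : Type u) [Category.{v} C] [Preadditive C] [Linear k C] where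
  E : C ≌ C
  pairing : ∀ X Y : C, (X ⟶ Y) ≃ₗ[k] Module.Dual k (Y ⟶ E.functor.obj X)
  naturality_right : ∀ {X Y Y' : C} (g : X ⟶ Y) (u : Y ⟶ Y') (h : Y' ⟶ E.functor.obj X),
    pairing X Y' (g ≫ u) h = pairing X Y g (u ≫ h)
  naturality_left : ∀ {X X' Y : C} (v : X' ⟶ X) (g : X ⟶ Y) (h : Y ⟶ E.functor.obj X'),
    pairing X' Y (v ≫ g) h = pairing X Y g (h ≫ E.functor.map v)

variable {C : Type u} [Category.{v} C] [Preadditive C] [Linear k C]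
  [HasZeroObject C] [HasShift C ℤ] [∀ n : ℤ, (shiftFunctor C n).Additive] [Pretriangulated C]
  [∀ X Y : C, FiniteDimensional k (X ⟶ Y)]

/-- `X` is Ext-projective in `D^{≤0}`: `X ∈ D^{≤0}` and `Hom(X, Y[1]) = 0` for `Y ∈ D^{≤0}`. -/
def ExtProjective (t : TStructure C) (X : C) : Prop :=
  t.le 0 X ∧ ∀ Y : C, t.le 0 Y → ∀ f : X ⟶ Y⟦(1 : ℤ)⟧, f = 0

/-- `X` is Ext-injective in `D^{≥0}`: `X ∈ D^{≥0}` and `Hom(Y, X[1]) = 0` for `Y ∈ D^{≥0}`. -/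
def ExtInjective (t : TStructure C) (X : C) : Prop :=
  t.ge 0 X ∧ ∀ Y : C, t.ge 0 Y → ∀ f : Y ⟶ X⟦(1 : ℤ)⟧, f = 0

lemma Equiv.forall_eq_zero_iff {M N : Type*} [Zero M] [Zero N] (e : M ≃ N) :
    (∀ m : M, m = 0) ↔ ∀ n : N, n = 0 := by
  simp only [← subsingleton_iff_forall_eq]
  exact e.subsingleton_congr

section Serre

variable {k} {D : Type*} [Category D] [Preadditive D] [Linear k D]

lemma SerreFunctorData.forall_eq_zero_iff (σ : SerreFunctorData k D) (X Z : D) :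
    (∀ f : X ⟶ Z, f = 0) ↔ ∀ g : Z ⟶ σ.E.functor.obj X, g = 0 := by
  simp only [← subsingleton_iff_forall_eq, (σ.pairing X Z).toEquiv.subsingleton_congr,
    Module.subsingleton_dual_iff]

end Serre

section Shift

variable {D : Type*} [Category D] [HasZeroMorphisms D] [HasShift D ℤ]

lemma forall_shift_hom_eq_zero_iff (A B : D) (a b : ℤ) (h : a + b = 0) :
    (∀ f : A⟦a⟧ ⟶ B, f = 0) ↔ ∀ g : A ⟶ B⟦b⟧, g = 0 :=
  ((shiftEquiv' D a b h).toAdjunction.homEquiv A B).forall_eq_zero_iff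

end Shift

namespace CategoryTheory.Triangulated.TStructure

variable {D : Type*} [Category D] [Preadditive D] [HasZeroObject D] [HasShift D ℤ]
  [∀ n : ℤ, (shiftFunctor D n).Additive] [Pretriangulated D] (t : TStructure D)

lemma ge_iff_forall_hom_from_shift_one (A : D) (n : ℤ) :
    t.ge n A ↔ ∀ Y : D, t.le n Y → ∀ f : Y⟦(1 : ℤ)⟧ ⟶ A, f = 0 := by
  rw [ge_iff_isGE, ← t.isGE_shift_iff A n (-1) (n + 1), t.isGE_iff_orthogonal n (n + 1) rfl]
  refine forall_congr' fun Y => forall_comm.trans ?_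
  rw [le_iff_isLE, forall_shift_hom_eq_zero_iff Y A 1 (-1) (by norm_num)]

lemma le_iff_forall_hom_to_shift_neg_one (X : D) (n : ℤ) :
    t.le n X ↔ ∀ Y : D, t.ge n Y → ∀ f : X ⟶ Y⟦(-1 : ℤ)⟧, f = 0 := by
  rw [le_iff_isLE, ← t.isLE_shift_iff X n 1 (n - 1), t.isLE_iff_orthogonal (n - 1) n (by ring)]
  refine forall_congr' fun Y => forall_comm.trans ?_
  rw [ge_iff_isGE, forall_shift_hom_eq_zero_iff X Y 1 (-1) (by norm_num)]

end CategoryTheory.Triangulated.TStructure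

section

variable {k} {D : Type*} [Category D] [Preadditive D] [Linear k D] [HasZeroObject D]
  [HasShift D ℤ] [∀ n : ℤ, (shiftFunctor D n).Additive] [Pretriangulated D]
  (σ : SerreFunctorData k D) (t : TStructure D) (X : D)

lemma extProjective_iff_le_zero_and_serre_ge_zero :
    ExtProjective t X ↔ t.le 0 X ∧ t.ge 0 (σ.E.functor.obj X) := by
  rw [ExtProjective, t.ge_iff_forall_hom_from_shift_one]
  exact and_congr_right' (forall₂_congr fun Y _ => σ.forall_eq_zero_iff X _)

lemma extInjective_serre_iff_le_zero_and_serre_ge_zero :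
    ExtInjective t (σ.E.functor.obj X) ↔ t.le 0 X ∧ t.ge 0 (σ.E.functor.obj X) := by
  rw [ExtInjective, t.le_iff_forall_hom_to_shift_neg_one, and_comm]
  exact and_congr_left' (forall₂_congr fun Y _ =>
    (forall_shift_hom_eq_zero_iff Y _ (-1) 1 (by norm_num)).symm.trans
      (σ.forall_eq_zero_iff X _).symm)

end

theorem extProjective_iff_serre
    (σ : SerreFunctorData k C) (t : TStructure C) (X : C) :
    (ExtProjective t X ↔ (t.le 0 X ∧ t.ge 0 (σ.E.functor.obj X))) ∧
    (ExtProjective t X ↔ ExtInjective t (σ.E.functor.obj X)) := by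
  have hproj := extProjective_iff_le_zero_and_serre_ge_zero σ t X
  exact ⟨hproj, hproj.trans (extInjective_serre_iff_le_zero_and_serre_ge_zero σ t X).symm⟩
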